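/- arXiv:math/0409260 — 2 statements merged into one kernel-verified Lean document; each statement's English description precedes it below -/
import Mathlib

section
/- The duality map on tableaux takes semistandard tableaux to semistandard tableaux: if T is a semistandard Young tableau with entries in {1,...,n} whose columns each have at most n entries, and *T is the tableau whose i-th column is the increasing list of the complement in {1,...,n} of the entries of the (m-i+1)-th column of T (where m is the number of columns), then *T is semistandard. -/
/-!
Record a sorted column `c` by its counting function `x ↦ #{y ∈ c | y ≤ x}`. The `q`-th entry
of `c` is at most `x` exactly when this count exceeds `q`, so for sorted columns `A`, `B` with
`|B| ≤ |A|`, the row condition `A[q] ≤ B[q]` says that the counting function of `B` lies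
below that of `A`. The dual of a column `c ⊆ {1,...,n}` has counting function
`x ↦ min x n - #{y ∈ c | y ≤ x}`, so dualising reverses this order, while `*T` also lists the
columns of `T` in reverse order: the two reversals cancel and the rows of `*T` weakly increase.
-/

/-- The dual of a column: the complement in `{1,...,n}` of the entries of `c`,
listed in increasing order. -/
def dualCol (n : ℕ) (c : List ℕ) : List ℕ :=
  ((Finset.Icc 1 n).filter (fun x => x ∉ c)).sort (· ≤ ·)

/-- The dual tableau `*T`: its `i`-th column is the increasing list of the complement in
`{1,...,n}` of the entries of the `(m-i+1)`-th column of `T` (a tableau with `m` columns,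
each column recorded as the list of its entries from top to bottom). -/
def dualTab (n : ℕ) {m : ℕ} (T : Fin m → List ℕ) : Fin m → List ℕ :=
  fun i => dualCol n (T i.rev)

/-- `T` is semistandard: entries lie in `{1,...,n}`, columns strictly increase,
column lengths weakly decrease left to right, and rows weakly increase
(expressed via adjacent columns). -/
def IsSemistandard (n : ℕ) {m : ℕ} (T : Fin m → List ℕ) : Prop :=
  (∀ j, List.Pairwise (· < ·) (T j)) ∧
  (∀ j, ∀ x ∈ T j, x ∈ Finset.Icc 1 n) ∧
  (∀ j k : Fin m, j ≤ k → (T k).length ≤ (T j).length) ∧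
  (∀ j k : Fin m, (j : ℕ) + 1 = (k : ℕ) →
    ∀ q < (T k).length, (T j).getD q 0 ≤ (T k).getD q 0)

namespace List

variable {α : Type*} [LinearOrder α]

theorem Pairwise.getD_le_iff_lt_length_filter {L : List α} (hL : L.Pairwise (· ≤ ·))
    {q : ℕ} (hq : q < L.length) (d x : α) :
    L.getD q d ≤ x ↔ q < (L.filter (· ≤ x)).length := by
  induction L generalizing q with
  | nil => simp at hq
  | cons a L ih =>
    rw [pairwise_cons] at hL
    by_cases hax : a ≤ x
    · cases q with
      | zero => simp [hax]
      | succ q =>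
        simpa [filter_cons_of_pos, hax] using ih hL.2 (by simpa using hq)
    · have hnil : (a :: L).filter (· ≤ x) = [] := by
        simp only [filter_eq_nil_iff, mem_cons, decide_eq_true_eq]
        rintro b (rfl | hb)
        exacts [hax, fun hbx => hax ((hL.1 b hb).trans hbx)]
      simp only [hnil, length_nil, Nat.not_lt_zero, iff_false]
      cases q with
      | zero => simpa using hax
      | succ q =>
        have hq : q < L.length := by simpa using hq
        rw [getD_cons_succ, getD_eq_getElem _ _ hq]
        exact fun h => hax ((hL.1 _ (getElem_mem hq)).trans h)

theorem Pairwise.forall_getD_le_iff_length_filter_le {A B : List α} (hA : A.Pairwise (· ≤ ·))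
    (hB : B.Pairwise (· ≤ ·)) (hlen : B.length ≤ A.length) (d : α) :
    (∀ q < B.length, A.getD q d ≤ B.getD q d) ↔
      ∀ x, (B.filter (· ≤ x)).length ≤ (A.filter (· ≤ x)).length := by
  constructor
  · intro hrow x
    by_contra! hlt
    set q := (A.filter (· ≤ x)).length
    have hqB : q < B.length := hlt.trans_le (length_filter_le _ _)
    have hBx : B.getD q d ≤ x := (hB.getD_le_iff_lt_length_filter hqB d x).mpr hlt
    exact lt_irrefl q <| (hA.getD_le_iff_lt_length_filter (hqB.trans_le hlen) d x).mp
      ((hrow q hqB).trans hBx)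
  · intro hcount q hq
    rw [hA.getD_le_iff_lt_length_filter (hq.trans_le hlen)]
    exact ((hB.getD_le_iff_lt_length_filter hq d _).mp le_rfl).trans_le (hcount _)

end List

theorem Finset.length_filter_sort {α : Type*} (s : Finset α) (r : α → α → Prop)
    [DecidableRel r] [IsTrans α r] [Std.Antisymm r] [Std.Total r]
    (p : α → Prop) [DecidablePred p] :
    ((s.sort r).filter p).length = (s.filter p).card := by
  rw [← Multiset.coe_card, ← Multiset.filter_coe, Finset.sort_eq]
  rfl

theorem card_filter_le_Icc_sdiff {n : ℕ} {S : Finset ℕ} (hS : S ⊆ Finset.Icc 1 n) (x : ℕ) :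
    ((Finset.Icc 1 n \ S).filter (· ≤ x)).card = min x n - (S.filter (· ≤ x)).card := by
  have hsub : S.filter (· ≤ x) ⊆ Finset.Icc 1 (min x n) := fun y hy => by
    have := hS (Finset.mem_filter.mp hy).1
    grind
  have hfilter :
      (Finset.Icc 1 n \ S).filter (· ≤ x) = Finset.Icc 1 (min x n) \ S.filter (· ≤ x) := by
    ext y
    grind
  rw [hfilter, Finset.card_sdiff_of_subset hsub, Nat.card_Icc, Nat.add_sub_cancel]

theorem dualCol_eq_sort_sdiff (n : ℕ) (c : List ℕ) :
    dualCol n c = (Finset.Icc 1 n \ c.toFinset).sort (· ≤ ·) := by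
  simp [dualCol, Finset.sdiff_eq_filter]

section dualCol

variable {n : ℕ} {c : List ℕ}

theorem length_dualCol (hnd : c.Nodup) (hc : ∀ y ∈ c, y ∈ Finset.Icc 1 n) :
    (dualCol n c).length = n - c.length := by
  rw [dualCol_eq_sort_sdiff, Finset.length_sort,
    Finset.card_sdiff_of_subset (fun y hy => hc y (List.mem_toFinset.mp hy)),
    Nat.card_Icc, List.toFinset_card_of_nodup hnd, Nat.add_sub_cancel]

theorem length_filter_dualCol (hnd : c.Nodup) (hc : ∀ y ∈ c, y ∈ Finset.Icc 1 n) (x : ℕ) :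
    ((dualCol n c).filter (· ≤ x)).length = min x n - (c.filter (· ≤ x)).length := by
  rw [dualCol_eq_sort_sdiff, Finset.length_filter_sort,
    card_filter_le_Icc_sdiff (fun y hy => hc y (List.mem_toFinset.mp hy)),
    ← List.toFinset_card_of_nodup (hnd.filter _), List.toFinset_filter]
  simp only [decide_eq_true_eq]

theorem pairwise_dualCol : (dualCol n c).Pairwise (· < ·) :=
  (Finset.sortedLT_sort _).pairwise

theorem dualCol_getD_le_of_getD_le {A B : List ℕ} (hA : A.Pairwise (· < ·))
    (hB : B.Pairwise (· < ·)) (hAn : ∀ y ∈ A, y ∈ Finset.Icc 1 n)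
    (hBn : ∀ y ∈ B, y ∈ Finset.Icc 1 n) (hlen : B.length ≤ A.length)
    (hrow : ∀ q < B.length, A.getD q 0 ≤ B.getD q 0) :
    ∀ q < (dualCol n A).length, (dualCol n B).getD q 0 ≤ (dualCol n A).getD q 0 := by
  have hlen' : (dualCol n A).length ≤ (dualCol n B).length := by
    rw [length_dualCol hA.nodup hAn, length_dualCol hB.nodup hBn]
    omega
  have hcount := ((hA.imp le_of_lt).forall_getD_le_iff_length_filter_le
    (hB.imp le_of_lt) hlen 0).mp hrow
  refine ((pairwise_dualCol.imp le_of_lt).forall_getD_le_iff_length_filter_le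
    (pairwise_dualCol.imp le_of_lt) hlen' 0).mpr fun x => ?_
  rw [length_filter_dualCol hA.nodup hAn, length_filter_dualCol hB.nodup hBn]
  exact Nat.sub_le_sub_left (hcount x) _

end dualCol

theorem stmt_1_general (n m : ℕ) (T : Fin m → List ℕ) (hT : IsSemistandard n T) :
    IsSemistandard n (dualTab n T) := by
  obtain ⟨hsort, hmem, hlens, hrows⟩ := hT
  have hlength (j : Fin m) : (dualTab n T j).length = n - (T j.rev).length :=
    length_dualCol (hsort _).nodup (hmem _)
  refine ⟨fun _ => pairwise_dualCol, fun j x hx => ?_, fun j k hjk => ?_, fun j k hjk => ?_⟩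
  · exact (Finset.mem_filter.mp ((Finset.mem_sort _).mp hx)).1
  · rw [hlength, hlength]
    exact Nat.sub_le_sub_left (hlens _ _ (Fin.rev_le_rev.mpr hjk)) n
  · have hrev : (k.rev : ℕ) + 1 = j.rev := by simp only [Fin.val_rev]; omega
    exact dualCol_getD_le_of_getD_le (hsort _) (hsort _) (hmem _) (hmem _)
      (hlens _ _ (Fin.le_def.mpr (by omega))) (hrows _ _ hrev)

/-- The duality map on tableaux takes semistandard tableaux to semistandard tableaux. -/
theorem stmt_1 (n m : ℕ) (T : Fin m → List ℕ) (hT : IsSemistandard n T)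
    (hlen : ∀ j, (T j).length ≤ n) :
    IsSemistandard n (dualTab n T) :=
  stmt_1_general n m T hT
end

section
/- Let H be the diagonal torus of GL_n(ℂ) acting on the homogeneous line bundle L_k^a over Gr_k(ℂ^n) with the action twisted by the character χ_r, where a = |r|/k. Let Ψ: Gr_k(ℂ^n) → Gr_{n-k}(ℂ^n) be the orthogonal complement map with respect to the standard symmetric bilinear form, and let Ψ̂ be the induced bundle map defined via the complex Hodge star. Then Ψ̂ ∘ h = h^{-1} ∘ Ψ̂ for all h ∈ H, where the target bundle L_{n-k}^a carries the twist by χ_{Λ-r} with Λ = (a,...,a). -/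
/-!
A diagonal matrix `h = diag(d)` is self-adjoint for `B`, so `Ψ(h x) = h⁻¹ Ψ(x)`. In coordinates
`h` acts on `Λ^k((ℂ^n)*)` diagonally, by `∏_{i ∈ I} d_i⁻¹` on the coordinate `I`, and up to
sign the Hodge star copies coordinate `Jᶜ` of `τ` to coordinate `J` of `*τ`; hence
`h⁻¹ ∘ * = det h · (* ∘ h)`. On the `a`-th tensor power this leaves the factor `(det h)^a`,
which is exactly the gap between the characters: `χ_r(h) = χ_{Λ-r}(h⁻¹) · (det h)^a`.
-/

open Matrix

/-- Coordinate model for `Λ^k((ℂ^n)*)` (equivalently `Λ^k(ℂ^n)`), with coordinates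
indexed by `k`-element subsets of `{1,...,n}`. -/
abbrev ExtP (n k : ℕ) := {s : Finset (Fin n) // s.card = k} → ℂ

/-- The action of a matrix on the coordinate model of the `k`-th exterior power via
determinants of submatrices. -/
noncomputable def extAct (n k : ℕ) (g : Matrix (Fin n) (Fin n) ℂ) (f : ExtP n k) :
    ExtP n k :=
  fun I => ∑ J : {s : Finset (Fin n) // s.card = k},
    (Matrix.of fun a b : Fin k =>
      g ((I.1.orderIsoOfFin I.2 a : Fin n)) ((J.1.orderIsoOfFin J.2 b : Fin n))).det * f J

/-- `sgn(I, Iᶜ)` as `(-1)` to the number of inversions. -/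
def interSign {n : ℕ} (I : Finset (Fin n)) : ℤ :=
  (-1) ^ (∑ i ∈ I, (Iᶜ.filter (· < i)).card)

/-- The complex Hodge star `* : Λ^k((ℂ^n)*) → Λ^{n-k}((ℂ^n)*)` for the standard
orientation and the bilinear form `B` making the standard basis orthonormal. -/
noncomputable def hodgeStar (n k : ℕ) (hk : k ≤ n) (f : ExtP n k) : ExtP n (n - k) :=
  fun J => ((interSign J.1ᶜ : ℤ) : ℂ) *
    f ⟨J.1ᶜ, by have := J.2; simp [Finset.card_compl, this]; omega⟩

/-- The pairing between `Λ^k((ℂ^n)*)` and `Λ^k(ℂ^n)` in coordinates. -/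
noncomputable def pairExt (n k : ℕ) (f u : ExtP n k) : ℂ := ∑ I, f I * u I

/-- The coordinates of the wedge `v_1 ∧ ... ∧ v_k ∈ Λ^k(ℂ^n)` of `k` vectors. -/
noncomputable def wedgeCoord (n k : ℕ) (v : Fin k → (Fin n → ℂ)) : ExtP n k :=
  fun I => (Matrix.of fun a b : Fin k => v b ((I.1.orderIsoOfFin I.2 a : Fin n))).det

/-- The bilinear form `B` on `ℂ^n` making the standard basis orthonormal. -/
noncomputable def Bform (n : ℕ) : LinearMap.BilinForm ℂ (Fin n → ℂ) :=
  LinearMap.mk₂ ℂ (fun v w => ∑ i, v i * w i)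
    (fun v v' w => by simp [add_mul, Finset.sum_add_distrib])
    (fun c v w => by simp [Finset.mul_sum, mul_assoc])
    (fun v w w' => by simp [mul_add, Finset.sum_add_distrib])
    (fun c v w => by simp [Finset.mul_sum, mul_left_comm])

/-- A point of the total space of the `H`-line bundle `L_k^{a}(r)` over `Gr_k(ℂ^n)` is
represented by a triple `(x, c, τ)`, standing for the element `c·(res_x τ)^{⊗ a}` of
the fiber `(Λ^k x^*)^{⊗ a}` over the `k`-plane `x`; `τ ∈ Λ^k((ℂ^n)^*)`. -/
abbrev BundlePt (n m : ℕ) := Submodule ℂ (Fin n → ℂ) × ℂ × ExtP n m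

/-- Two representing triples give the same point of the total space iff the underlying
planes agree and the represented tensors agree, i.e. they take the same values on all
`a`-th powers of wedges of vectors from the plane. -/
def FiberRel (n m a : ℕ) (e e' : BundlePt n m) : Prop :=
  e.1 = e'.1 ∧ ∀ v : Fin m → (Fin n → ℂ), (∀ i, v i ∈ e.1) →
    e.2.1 * pairExt n m e.2.2 (wedgeCoord n m v) ^ a
      = e'.2.1 * pairExt n m e'.2.2 (wedgeCoord n m v) ^ a

/-- The action of the diagonal torus element `h = diag(d_1,...,d_n)` on the bundle
`L_k^{a}(t)` (for an integral twisting character `t`): `h` moves the plane by the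
standard action, multiplies the scalar by `χ_t(h) = Π d_i^{t_i}`, and acts on the
covector `τ` by the dual of the standard action (which for diagonal `h` is the action
of the diagonal matrix `h⁻¹`). -/
noncomputable def actTwist (n m : ℕ) (t : Fin n → ℤ) (d : Fin n → ℂˣ)
    (e : BundlePt n m) : BundlePt n m :=
  (Submodule.map (Matrix.toLin' (Matrix.diagonal fun i => (d i : ℂ))) e.1,
   (∏ i, ((d i ^ t i : ℂˣ) : ℂ)) * e.2.1,
   extAct n m (Matrix.diagonal fun i => (((d i)⁻¹ : ℂˣ) : ℂ)) e.2.2)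

/-- The bundle map `Ψ̂ : L_k^{a}(r) → L_{n-k}^{a}(Λ-r)` covering the orthogonal
complement map `Ψ`, defined by `Ψ̂(res_x τ) = res_{Ψ(x)}(*τ)` via the complex Hodge
star. -/
noncomputable def psiHat (n k : ℕ) (hk : k ≤ n) (e : BundlePt n k) : BundlePt n (n - k) :=
  ((Bform n).orthogonal e.1, e.2.1, hodgeStar n k hk e.2.2)

section Diagonal

variable {n : ℕ}

lemma Bform_apply (v w : Fin n → ℂ) : Bform n v w = ∑ i, v i * w i := rfl

lemma Bform_diagonal_mulVec_left (δ v w : Fin n → ℂ) :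
    Bform n (diagonal δ *ᵥ v) w = Bform n v (diagonal δ *ᵥ w) := by
  simp only [Bform_apply, mulVec_diagonal]
  exact Finset.sum_congr rfl fun i _ => by ring

lemma Bform_orthogonal_map_toLin'_diagonal (δ : Fin n → ℂ) (x : Submodule ℂ (Fin n → ℂ)) :
    (Bform n).orthogonal (x.map (toLin' (diagonal δ)))
      = ((Bform n).orthogonal x).comap (toLin' (diagonal δ)) := by
  ext w
  simp [LinearMap.BilinForm.mem_orthogonal_iff, Bform_diagonal_mulVec_left]

lemma Bform_orthogonal_map_units_diagonal (d : Fin n → ℂˣ) (x : Submodule ℂ (Fin n → ℂ)) :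
    (Bform n).orthogonal (x.map (toLin' (diagonal fun i => (d i : ℂ))))
      = ((Bform n).orthogonal x).map (toLin' (diagonal fun i => (((d i)⁻¹ : ℂˣ) : ℂ))) := by
  have hd : diagonal (fun i => (d i : ℂ)) * diagonal (fun i => (((d i)⁻¹ : ℂˣ) : ℂ)) = 1 := by
    simp [diagonal_mul_diagonal]
  have hd' : diagonal (fun i => (((d i)⁻¹ : ℂˣ) : ℂ)) * diagonal (fun i => (d i : ℂ)) = 1 := by
    simp [diagonal_mul_diagonal]
  rw [Bform_orthogonal_map_toLin'_diagonal]
  exact (Submodule.map_equiv_eq_comap_symm (toLin'OfInv hd hd') _).symm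

end Diagonal

lemma prod_zpow_eq_prod_inv_zpow_sub_mul_pow {ι G : Type*} [Fintype ι] [CommGroup G]
    (g : ι → G) (r : ι → ℤ) (a : ℕ) :
    ∏ i, g i ^ r i = (∏ i, (g i)⁻¹ ^ ((a : ℤ) - r i)) * (∏ i, g i) ^ a := by
  rw [← Finset.prod_pow, ← Finset.prod_mul_distrib]
  exact Finset.prod_congr rfl fun i _ => by group

section ExteriorDiagonal

variable {n m : ℕ}

lemma det_minor_diagonal_self (δ : Fin n → ℂ) (I : {s : Finset (Fin n) // s.card = m}) :
    (of fun a b : Fin m =>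
      diagonal δ (I.1.orderIsoOfFin I.2 a : Fin n) (I.1.orderIsoOfFin I.2 b : Fin n)).det
      = ∏ i ∈ I.1, δ i := by
  have hinj : Function.Injective fun a : Fin m => (I.1.orderIsoOfFin I.2 a : Fin n) :=
    Subtype.val_injective.comp (I.1.orderIsoOfFin I.2).injective
  change ((diagonal δ).submatrix _ _).det = _
  rw [submatrix_diagonal _ _ hinj, det_diagonal, ← Finset.prod_coe_sort I.1]
  exact (I.1.orderIsoOfFin I.2).toEquiv.prod_comp fun i : I.1 => δ i

lemma det_minor_diagonal_of_ne (δ : Fin n → ℂ) {I J : {s : Finset (Fin n) // s.card = m}}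
    (hIJ : J ≠ I) :
    (of fun a b : Fin m =>
      diagonal δ (I.1.orderIsoOfFin I.2 a : Fin n) (J.1.orderIsoOfFin J.2 b : Fin n)).det
      = 0 := by
  obtain ⟨j, hjJ, hjI⟩ : ∃ j ∈ J.1, j ∉ I.1 := Finset.not_subset.mp fun hsub =>
    hIJ (Subtype.ext (Finset.eq_of_subset_of_card_le hsub (by rw [I.2, J.2])))
  refine det_eq_zero_of_column_eq_zero ((J.1.orderIsoOfFin J.2).symm ⟨j, hjJ⟩) fun a => ?_
  rw [of_apply, OrderIso.apply_symm_apply, diagonal_apply_ne]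
  intro h
  have hmem := (I.1.orderIsoOfFin I.2 a).2
  rw [h] at hmem
  exact hjI hmem

lemma extAct_diagonal_apply (δ : Fin n → ℂ) (f : ExtP n m)
    (I : {s : Finset (Fin n) // s.card = m}) :
    extAct n m (diagonal δ) f I = (∏ i ∈ I.1, δ i) * f I := by
  rw [extAct, Finset.sum_eq_single I
    (fun J _ hJ => by rw [det_minor_diagonal_of_ne δ hJ, zero_mul]) (by simp),
    det_minor_diagonal_self]

lemma hodgeStar_extAct_diagonal_apply (k : ℕ) (hk : k ≤ n) (δ : Fin n → ℂ) (f : ExtP n k)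
    (J : {s : Finset (Fin n) // s.card = n - k}) :
    hodgeStar n k hk (extAct n k (diagonal δ) f) J
      = (∏ i ∈ J.1ᶜ, δ i) * hodgeStar n k hk f J := by
  simp only [hodgeStar, extAct_diagonal_apply]
  ring

lemma extAct_diagonal_hodgeStar (k : ℕ) (hk : k ≤ n) (d : Fin n → ℂˣ) (f : ExtP n k) :
    extAct n (n - k) (diagonal fun i => (d i : ℂ)) (hodgeStar n k hk f)
      = (∏ i, (d i : ℂ)) •
        hodgeStar n k hk (extAct n k (diagonal fun i => (((d i)⁻¹ : ℂˣ) : ℂ)) f) := by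
  funext J
  rw [Pi.smul_apply, smul_eq_mul, extAct_diagonal_apply, hodgeStar_extAct_diagonal_apply,
    ← Finset.prod_mul_prod_compl J.1]
  have hJc : ∏ i ∈ J.1ᶜ, (d i : ℂ) * (((d i)⁻¹ : ℂˣ) : ℂ) = 1 :=
    Finset.prod_eq_one fun i _ => (d i).mul_inv
  rw [Finset.prod_mul_distrib] at hJc
  linear_combination -(∏ i ∈ J.1, (d i : ℂ)) * hodgeStar n k hk f J * hJc

end ExteriorDiagonal

lemma pairExt_smul_left {n m : ℕ} (c : ℂ) (f u : ExtP n m) :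
    pairExt n m (c • f) u = c * pairExt n m f u := by
  simp only [pairExt, Finset.mul_sum, Pi.smul_apply, smul_eq_mul, mul_assoc]

theorem stmt_5_general (n k a : ℕ) (hk : k ≤ n) (r : Fin n → ℤ)
    (d : Fin n → ℂˣ)
    (x : Submodule ℂ (Fin n → ℂ)) (c : ℂ) (τ : ExtP n k) :
    FiberRel n (n - k) a
      (psiHat n k hk (actTwist n k r d (x, c, τ)))
      (actTwist n (n - k) (fun i => (a : ℤ) - r i) (fun i => (d i)⁻¹)
        (psiHat n k hk (x, c, τ))) := by
  refine ⟨Bform_orthogonal_map_units_diagonal d x, fun v _ => ?_⟩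
  have hchar : ∏ i, ((d i ^ r i : ℂˣ) : ℂ)
      = (∏ i, (((d i)⁻¹ ^ ((a : ℤ) - r i) : ℂˣ) : ℂ)) * (∏ i, (d i : ℂ)) ^ a := by
    simpa only [map_prod, map_mul, map_pow, Units.coeHom_apply]
      using congrArg (Units.coeHom ℂ) (prod_zpow_eq_prod_inv_zpow_sub_mul_pow d r a)
  simp only [psiHat, actTwist, inv_inv, extAct_diagonal_hodgeStar, pairExt_smul_left, hchar]
  ring

/-- Equivariance of the bundle map: `Ψ̂ ∘ h = h⁻¹ ∘ Ψ̂` for every `h` in the diagonal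
torus `H`, where the source `L_k^{a}` carries the twist by `χ_r` and the target
`L_{n-k}^{a}` carries the twist by `χ_{Λ-r}`, `Λ = (a,...,a)`, `a = |r|/k`. -/
theorem stmt_5 (n k a : ℕ) (hk : k ≤ n) (r : Fin n → ℤ)
    (ha : (k : ℤ) * a = ∑ i, r i) (d : Fin n → ℂˣ)
    (x : Submodule ℂ (Fin n → ℂ)) (hx : Module.finrank ℂ x = k) (c : ℂ) (τ : ExtP n k) :
    FiberRel n (n - k) a
      (psiHat n k hk (actTwist n k r d (x, c, τ)))
      (actTwist n (n - k) (fun i => (a : ℤ) - r i) (fun i => (d i)⁻¹)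
        (psiHat n k hk (x, c, τ))) :=
  stmt_5_general n k a hk r d x c τ
end
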